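/- arXiv:2111.08166 — 3 statements merged into one kernel-verified Lean document; each statement's English description precedes it below -/
import Mathlib

section
/- Let C be a k-linear dg category and let {F_i | i ∈ I} be a generating set for C (i.e., the twisted complexes over the full subcategory on the F_i are quasi-equivalent to the twisted complexes over C). Assume that for all i, j ∈ I, either Hom*(F_i, F_j) ≠ 0 or Hom*(F_j, F_i) ≠ 0 in cohomology, and that Hom^0(F_ℓ, F_ℓ) = k for all ℓ ∈ I. Then Tw(C) is indecomposable, i.e., C is not pretriangulated equivalent to a coproduct of two nonempty dg categories. -/
/-!
Statement 0 (indecomposability criterion).  We work at the level of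
pretriangulated (triangulated) categories, which model the homotopy
categories of twisted complexes `Tw(C)` over dg categories.  A dg category is
"decomposable" if its pretriangulated closure is equivalent to a direct sum of
two components with no morphisms between them, each containing a nonzero
object; every object must then split as a biproduct of a piece from each
component.  A family `F` is a generating set if any object receiving only zero
graded morphisms from all the `F i` is a zero object.
-/

open CategoryTheory Limits Pretriangulated

universe v u

variable (k : Type*) [Field k]

variable (C : Type u) [Category.{v} C] [Preadditive C] [CategoryTheory.Linear k C]
  [HasZeroObject C] [HasShift C ℤ] [∀ n : ℤ, (shiftFunctor C n).Additive]
  [Pretriangulated C] [HasBinaryBiproducts C]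

/-- `Hom*(A,B) ≠ 0`: some graded (shifted) morphism from `A` to `B` is nonzero. -/
def HomStarNeZero {C : Type u} [Category.{v} C] [Preadditive C] [HasShift C ℤ]
    (A B : C) : Prop :=
  ∃ (n : ℤ) (f : A ⟶ B⟦n⟧), f ≠ 0

/-- `{F i}` is a generating set: an object with no nonzero graded morphisms
from any `F i` is a zero object. -/
def Generates {ι : Type*} (F : ι → C) : Prop :=
  ∀ X : C, (∀ (i : ι) (n : ℤ) (f : F i ⟶ X⟦n⟧), f = 0) → IsZero X

/-- `Tw(C)` is decomposable: there are two classes of objects `P`, `Q`, each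
containing a nonzero object, with all graded morphisms between them vanishing
in both directions, such that every object splits as a biproduct of an object
of `P` and an object of `Q`. -/
def Decomposable : Prop :=
  ∃ P Q : C → Prop,
    (∃ d, P d ∧ ¬ IsZero d) ∧ (∃ e, Q e ∧ ¬ IsZero e) ∧
    (∀ d e, P d → Q e → ∀ (n : ℤ) (f : d ⟶ e⟦n⟧), f = 0) ∧
    (∀ d e, P d → Q e → ∀ (n : ℤ) (f : e ⟶ d⟦n⟧), f = 0) ∧
    (∀ X : C, ∃ d e, P d ∧ Q e ∧ Nonempty (X ≅ d ⊞ e))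

/-- If `C` has a generating set `{F i}` such that for all
`i j` either `Hom*(F i, F j) ≠ 0` or `Hom*(F j, F i) ≠ 0`, and
`Hom^0(F ℓ, F ℓ) = k` for every `ℓ`, then `Tw(C)` is indecomposable. -/
theorem stmt_0 {ι : Type*} (F : ι → C)
    (hgen : Generates C F)
    (hconn : ∀ i j : ι, HomStarNeZero (F i) (F j) ∨ HomStarNeZero (F j) (F i))
    (hend : ∀ ℓ : ι, Nonempty ((F ℓ ⟶ F ℓ) ≃ₗ[k] k)) :
    ¬ Decomposable C := by
  rintro ⟨P, Q, ⟨d₀, hPd₀, hd₀⟩, ⟨e₀, hQe₀, he₀⟩, hPQ, hQP, hsplit⟩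
  -- each `F ℓ` is nonzero
  have hFne : ∀ ℓ, 𝟙 (F ℓ) ≠ 0 := by
    intro ℓ hz
    obtain ⟨φ⟩ := hend ℓ
    have h1 : φ.symm 1 = φ.symm 0 := by
      have h2 : (φ.symm 1 : F ℓ ⟶ F ℓ) = φ.symm 1 ≫ 𝟙 (F ℓ) := by simp
      rw [hz, Limits.comp_zero] at h2
      rw [h2, map_zero]
    exact one_ne_zero (φ.symm.injective h1)
  -- every endomorphism of `F ℓ` is a scalar multiple of the identity
  have hscal : ∀ ℓ (f : F ℓ ⟶ F ℓ), ∃ c : k, f = c • 𝟙 (F ℓ) := by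
    intro ℓ f
    obtain ⟨φ⟩ := hend ℓ
    have hid : φ (𝟙 (F ℓ)) ≠ 0 := by
      intro h
      exact hFne ℓ (by simpa using φ.injective (by simpa using h))
    refine ⟨φ f / φ (𝟙 (F ℓ)), ?_⟩
    have h0 : φ (f - (φ f / φ (𝟙 (F ℓ))) • 𝟙 (F ℓ)) = 0 := by
      rw [map_sub, map_smul, smul_eq_mul, div_mul_cancel₀ _ hid, sub_self]
    have h1 : f - (φ f / φ (𝟙 (F ℓ))) • 𝟙 (F ℓ) = 0 := by
      simpa using φ.injective (by simpa using h0)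
    exact sub_eq_zero.mp h1
  -- every idempotent endomorphism of `F ℓ` is 0 or 1
  have hidem : ∀ ℓ (f : F ℓ ⟶ F ℓ), f ≫ f = f → f = 0 ∨ f = 𝟙 (F ℓ) := by
    intro ℓ f hf
    obtain ⟨c, hc⟩ := hscal ℓ f
    have hcc : (c * c - c) • 𝟙 (F ℓ) = 0 := by
      have : (c • 𝟙 (F ℓ)) ≫ (c • 𝟙 (F ℓ)) = c • 𝟙 (F ℓ) := by rw [← hc]; exact hf
      rw [Linear.smul_comp, Linear.comp_smul, Category.comp_id, smul_smul] at this
      rw [sub_smul, this, sub_self]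
    have hc01 : c = 0 ∨ c = 1 := by
      by_contra h
      push_neg at h
      have hne : c * c - c ≠ 0 := by
        intro h0
        have hcf : c * (c - 1) = 0 := by linear_combination h0
        rcases mul_eq_zero.mp hcf with h1 | h1
        · exact h.1 h1
        · exact h.2 (by linear_combination h1)
      apply hFne ℓ
      have := congrArg (fun g => (c * c - c)⁻¹ • g) hcc
      simpa [smul_smul, inv_mul_cancel₀ hne] using this
    rcases hc01 with h | h
    · left; rw [hc, h, zero_smul]
    · right; rw [hc, h, one_smul]
  -- each `F ℓ` is isomorphic to an object of `P` or an object of `Q`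
  have hside : ∀ ℓ, (∃ d, P d ∧ Nonempty (F ℓ ≅ d)) ∨ (∃ e, Q e ∧ Nonempty (F ℓ ≅ e)) := by
    intro ℓ
    obtain ⟨d, e, hPd, hQe, ⟨ψ⟩⟩ := hsplit (F ℓ)
    set p : d ⊞ e ⟶ d ⊞ e := biprod.fst ≫ biprod.inl with hp
    have hpp : p ≫ p = p := by simp [hp]
    set q : F ℓ ⟶ F ℓ := ψ.hom ≫ p ≫ ψ.inv with hq
    have hqq : q ≫ q = q := by
      simp only [hq, Category.assoc, Iso.inv_hom_id_assoc]
      rw [← Category.assoc p p, hpp]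
    have hpq : p = ψ.inv ≫ q ≫ ψ.hom := by simp [hq]
    rcases hidem ℓ q hqq with h | h
    · -- q = 0, so p = 0 and F ℓ ≅ e
      right
      refine ⟨e, hQe, ⟨ψ.trans ⟨biprod.snd, biprod.inr, ?_, by simp⟩⟩⟩
      have hp0 : p = 0 := by rw [hpq, h]; simp
      have := biprod.total (X := d) (Y := e)
      rw [← hp, hp0, zero_add] at this
      exact this
    · -- q = 𝟙, so p = 𝟙 and F ℓ ≅ d
      left
      refine ⟨d, hPd, ⟨ψ.trans ⟨biprod.fst, biprod.inl, ?_, by simp⟩⟩⟩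
      rw [← hp, hpq, h]
      simp
  -- all `F ℓ` lie on the same side
  have hsame : (∀ ℓ, ∃ d, P d ∧ Nonempty (F ℓ ≅ d)) ∨ (∀ ℓ, ∃ e, Q e ∧ Nonempty (F ℓ ≅ e)) := by
    by_cases h : ∃ j e, Q e ∧ Nonempty (F j ≅ e)
    · right
      obtain ⟨j, e, hQe, ⟨ψj⟩⟩ := h
      intro i
      rcases hside i with ⟨d, hPd, ⟨ψi⟩⟩ | h'
      · exfalso
        rcases hconn i j with ⟨n, f, hf⟩ | ⟨n, f, hf⟩
        · apply hf
          have h0 : ψi.inv ≫ f ≫ (shiftFunctor C n).map ψj.hom = 0 :=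
            hPQ d e hPd hQe n _
          have : f = ψi.hom ≫ (ψi.inv ≫ f ≫ (shiftFunctor C n).map ψj.hom) ≫
              (shiftFunctor C n).map ψj.inv := by
            simp [← Functor.map_comp]
          rw [this, h0]
          simp
        · apply hf
          have h0 : ψj.inv ≫ f ≫ (shiftFunctor C n).map ψi.hom = 0 :=
            hQP d e hPd hQe n _
          have : f = ψj.hom ≫ (ψj.inv ≫ f ≫ (shiftFunctor C n).map ψi.hom) ≫
              (shiftFunctor C n).map ψi.inv := by
            simp [← Functor.map_comp]
          rw [this, h0]
          simp
      · exact h'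
    · left
      intro i
      rcases hside i with h' | h'
      · exact h'
      · exact absurd ⟨i, h'⟩ h
  rcases hsame with hall | hall
  · -- all on the `P` side: `e₀` receives no graded morphisms, so it is zero
    apply he₀
    apply hgen
    intro i n f
    obtain ⟨d, hPd, ⟨ψ⟩⟩ := hall i
    have h0 : ψ.inv ≫ f = 0 := hPQ d e₀ hPd hQe₀ n _
    have : f = ψ.hom ≫ ψ.inv ≫ f := by simp
    rw [this, h0, Limits.comp_zero]
  · -- all on the `Q` side: `d₀` receives no graded morphisms, so it is zero
    apply hd₀
    apply hgen
    intro i n f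
    obtain ⟨e, hQe, ⟨ψ⟩⟩ := hall i
    have h0 : ψ.inv ≫ f = 0 := hQP d₀ e hPd₀ hQe n _
    have : f = ψ.hom ≫ ψ.inv ≫ f := by simp
    rw [this, h0, Limits.comp_zero]
end

section
/- Let G be the free group (or the mapping class group action) generated by Hurwitz moves and cyclic permutation acting on cyclically ordered tuples of elements of a group Γ with distinguished elements a, b satisfying τ_b^{-1}τ_a^{-1}(b) = a, where τ_x denotes conjugation-type action. Then the tuple (a, ..., a, τ_a^{2k}(b), b) with 2k+1 copies of a is Hurwitz-equivalent to the tuple (a, ..., a, b) with 2k+2 copies of a. -/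
/-!
Sliding an entry leftwards past a block by Hurwitz moves replaces it by its image under the
inverse twists of that block; past `2k+1` copies of `a` this turns `τ_a^{2k}(b)` into
`τ_a⁻¹(b)`. A cyclic permutation moves `τ_a⁻¹(b)` to the end, right after `b`, and one more
move turns `(b, τ_a⁻¹(b))` into `(τ_b⁻¹ τ_a⁻¹(b), b) = (a, b)`.
-/

/-- Hurwitz equivalence of tuples: the equivalence relation generated by
Hurwitz moves and cyclic permutation. -/
inductive HurwitzEquiv {Γ : Type*} (τ : Γ → Equiv.Perm Γ) : List Γ → List Γ → Prop
  | refl (l : List Γ) : HurwitzEquiv τ l l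
  | symm {l l' : List Γ} : HurwitzEquiv τ l l' → HurwitzEquiv τ l' l
  | trans {l₁ l₂ l₃ : List Γ} :
      HurwitzEquiv τ l₁ l₂ → HurwitzEquiv τ l₂ l₃ → HurwitzEquiv τ l₁ l₃
  | moveR (l₁ l₂ : List Γ) (x y : Γ) :
      HurwitzEquiv τ (l₁ ++ x :: y :: l₂) (l₁ ++ y :: (τ y x) :: l₂)
  | moveL (l₁ l₂ : List Γ) (x y : Γ) :
      HurwitzEquiv τ (l₁ ++ x :: y :: l₂) (l₁ ++ ((τ x)⁻¹ y) :: x :: l₂)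
  | cyclic (x : Γ) (l : List Γ) : HurwitzEquiv τ (x :: l) (l ++ [x])

namespace HurwitzEquiv

variable {Γ : Type*} (τ : Γ → Equiv.Perm Γ)

instance : Trans (HurwitzEquiv τ) (HurwitzEquiv τ) (HurwitzEquiv τ) := ⟨trans⟩

theorem slide (l₀ : List Γ) (x : Γ) (l : List Γ) :
    HurwitzEquiv τ (l₀ ++ x :: l) ((l₀.map fun y ↦ (τ y)⁻¹).prod x :: (l₀ ++ l)) := by
  induction l₀ using List.reverseRecOn generalizing x l with
  | nil => exact refl _
  | append_singleton l₀ y ih =>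
    calc HurwitzEquiv τ (l₀ ++ [y] ++ x :: l) (l₀ ++ (τ y)⁻¹ x :: y :: l) := by
          simpa using moveL l₀ l y x
      HurwitzEquiv τ _ _ := by simpa [Equiv.Perm.mul_apply] using ih ((τ y)⁻¹ x) (y :: l)

theorem slide_replicate (a : Γ) (n : ℕ) (x : Γ) (l : List Γ) :
    HurwitzEquiv τ (List.replicate n a ++ ((τ a) ^ n) x :: l)
      (x :: (List.replicate n a ++ l)) := by
  simpa [List.map_replicate, List.prod_replicate, inv_pow] using
    slide τ (List.replicate n a) ((τ a ^ n) x) l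

end HurwitzEquiv

theorem stmt_10 {Γ : Type*} (τ : Γ → Equiv.Perm Γ) (a b : Γ) (k : ℕ)
    (hrel : (τ b)⁻¹ ((τ a)⁻¹ b) = a) :
    HurwitzEquiv τ
      (List.replicate (2 * k + 1) a ++ [((τ a) ^ (2 * k)) b, b])
      (List.replicate (2 * k + 2) a ++ [b]) := by
  have hpow : ((τ a) ^ (2 * k)) b = ((τ a) ^ (2 * k + 1)) ((τ a)⁻¹ b) := by
    simp [pow_succ, Equiv.Perm.mul_apply]
  calc HurwitzEquiv τ _ ((τ a)⁻¹ b :: (List.replicate (2 * k + 1) a ++ [b])) := by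
        rw [hpow]; exact .slide_replicate τ a _ _ [b]
    HurwitzEquiv τ _ (List.replicate (2 * k + 1) a ++ [b, (τ a)⁻¹ b]) := by
        simpa using
          HurwitzEquiv.cyclic (τ := τ) ((τ a)⁻¹ b) (List.replicate (2 * k + 1) a ++ [b])
    HurwitzEquiv τ _ (List.replicate (2 * k + 1) a ++ [a, b]) := by
        simpa only [hrel] using
          HurwitzEquiv.moveL (τ := τ) (List.replicate (2 * k + 1) a) [] b ((τ a)⁻¹ b)
    _ = List.replicate (2 * k + 2) a ++ [b] := by simp [List.replicate_succ']
end

section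
/- Define a sequence of tuples by the abstract Lefschetz moves: stabilization appends a new generator, Hurwitz moves conjugate adjacent entries, and cyclic permutation rotates the tuple. Starting from the tuple (α₁^{i₁+1}, ..., α_{k-1}^{i_{k-1}+1}) (concatenation of i_j+1 copies of α_j) over the group generated by α₁,...,α_k with relations τ_{α_i}(α_j) = α_j for |i−j| ≥ 2 and τ_{τ_{α_{k-1}}(α_k)}(α_{k-1}) = α_k, the tuple (α₁^{i₁+1}, ..., α_{k-2}^{i_{k-2}+1}, α_{k-1}^{4i_{k-1}+i_k+1}) is related by these moves, together with one replacement of τ_{α_{k-1}}^{-4i_{k-1}}(α_k) by α_k, to the tuple (α₁^{i₁+1}, ..., α_{k-1}^{4i_{k-1}+1}, α_k^{i_k+1}). -/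
/-!
Statement 14: the combinatorial core of the diffeomorphism
`Z_{(i₁;…;4i_{k-1}+i_k)} ≅ Z_{(i₁;…;4i_{k-1};i_k)}`.  Vanishing cycles are
elements of a set `Γ` with Dehn twists `τ : Γ → Equiv.Perm Γ`; the allowed
moves on tuples are Hurwitz moves, cyclic rotation, stabilization (prepending
the new vanishing cycle `α_k`), and a single formal replacement of
`τ_{α_{k-1}}^{-4 i_{k-1}}(α_k)` by `α_k`.
-/

/-- Abstract Lefschetz moves: Hurwitz moves, cyclic rotation, stabilization by
a designated element `s`, and replacement of the designated element `x` by the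
designated element `y`. -/
inductive LefMoves {Γ : Type*} (τ : Γ → Equiv.Perm Γ) (s x y : Γ) :
    List Γ → List Γ → Prop
  | refl (l : List Γ) : LefMoves τ s x y l l
  | symm {l l' : List Γ} : LefMoves τ s x y l l' → LefMoves τ s x y l' l
  | trans {l₁ l₂ l₃ : List Γ} :
      LefMoves τ s x y l₁ l₂ → LefMoves τ s x y l₂ l₃ → LefMoves τ s x y l₁ l₃
  | moveR (l₁ l₂ : List Γ) (u v : Γ) :
      LefMoves τ s x y (l₁ ++ u :: v :: l₂) (l₁ ++ v :: (τ v u) :: l₂)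
  | moveL (l₁ l₂ : List Γ) (u v : Γ) :
      LefMoves τ s x y (l₁ ++ u :: v :: l₂) (l₁ ++ ((τ u)⁻¹ v) :: u :: l₂)
  | cyclic (u : Γ) (l : List Γ) : LefMoves τ s x y (u :: l) (l ++ [u])
  | stab (l : List Γ) : LefMoves τ s x y l (s :: l)
  | repl (l₁ l₂ : List Γ) :
      LefMoves τ s x y (l₁ ++ x :: l₂) (l₁ ++ y :: l₂)

/-!
Write `a = α_{k-1}`, `b = α_k`. Stabilize to put `b` just before the last `a`. The braid
relation turns the pair `(b, a)` into `(τ_a b, b)`, and since `τ_{τ_a b} a = b`, the cycle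
`τ_a b` sweeps left across all but the first `4 i'` copies of `a`, turning each into `b`.
Turning the pair back into `(b, a)` leaves one `b` right after those `4 i'` copies; pushing
it left across them twists it into `τ_a^{-4 i'} b`, which the replacement turns back into
`b`. As `b` commutes with `α_1, …, α_{k-2}`, it then travels around the tuple to the end.
-/

namespace LefMoves

variable {Γ : Type*} {τ : Γ → Equiv.Perm Γ}

section Moves

variable {s x y : Γ}

instance : Trans (LefMoves τ s x y) (LefMoves τ s x y) (LefMoves τ s x y) := ⟨trans⟩

local infix:50 " ∼ " => LefMoves τ s x y

theorem append_comm (l₁ l₂ : List Γ) : LefMoves τ s x y (l₁ ++ l₂) (l₂ ++ l₁) := by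
  induction l₁ generalizing l₂ with
  | nil => simpa using refl l₂
  | cons u l ih =>
    calc u :: l ++ l₂ ∼ l ++ l₂ ++ [u] := cyclic u (l ++ l₂)
      _ ∼ l₂ ++ u :: l := by simpa using ih (l₂ ++ [u])

theorem insert_stab (l₁ l₂ : List Γ) : LefMoves τ s x y (l₁ ++ l₂) (l₁ ++ s :: l₂) :=
  (append_comm l₁ l₂).trans <| (stab _).trans <| append_comm (s :: l₂) l₁

theorem slide_left_of_fixed {b : Γ} :
    ∀ {m : List Γ}, (∀ u ∈ m, τ b u = u) → ∀ l₁ l₂ : List Γ,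
      LefMoves τ s x y (l₁ ++ m ++ b :: l₂) (l₁ ++ b :: (m ++ l₂))
  | [], _, l₁, l₂ => by simpa using refl (l₁ ++ b :: l₂)
  | u :: m, hm, l₁, l₂ => by
    have hmove := moveR (τ := τ) (s := s) (x := x) (y := y) l₁ (m ++ l₂) u b
    rw [hm u List.mem_cons_self] at hmove
    have hslide := slide_left_of_fixed (fun v hv => hm v (List.mem_cons_of_mem u hv))
      (l₁ ++ [u]) l₂
    simp only [List.append_assoc, List.cons_append, List.nil_append] at hslide ⊢
    exact hslide.trans hmove

theorem slide_left_replicate (a g : Γ) :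
    ∀ (n : ℕ) (l₁ l₂ : List Γ), LefMoves τ s x y (l₁ ++ List.replicate n a ++ g :: l₂)
      (l₁ ++ ((τ a)⁻¹ ^ n) g :: (List.replicate n a ++ l₂))
  | 0, l₁, l₂ => by simpa using refl (l₁ ++ g :: l₂)
  | n + 1, l₁, l₂ => by
    have hslide := slide_left_replicate a g n (l₁ ++ [a]) l₂
    have hmove := moveL (τ := τ) (s := s) (x := x) (y := y) l₁
      (List.replicate n a ++ l₂) a (((τ a)⁻¹ ^ n) g)
    rw [← Equiv.Perm.mul_apply, ← pow_succ'] at hmove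
    simp only [List.replicate_succ, List.append_assoc, List.cons_append,
      List.nil_append] at hslide ⊢
    exact hslide.trans hmove

theorem slide_left_replicate_of_twist_eq {a b c : Γ} (h : τ c a = b) :
    ∀ (n : ℕ) (l₁ l₂ : List Γ), LefMoves τ s x y (l₁ ++ List.replicate n a ++ c :: l₂)
      (l₁ ++ c :: (List.replicate n b ++ l₂))
  | 0, l₁, l₂ => by simpa using refl (l₁ ++ c :: l₂)
  | n + 1, l₁, l₂ => by
    have hslide := slide_left_replicate_of_twist_eq h n (l₁ ++ [a]) l₂
    have hmove := moveR (τ := τ) (s := s) (x := x) (y := y) l₁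
      (List.replicate n b ++ l₂) a c
    rw [h] at hmove
    simp only [List.replicate_succ, List.append_assoc, List.cons_append,
      List.nil_append] at hslide ⊢
    exact hslide.trans hmove

section Braid

variable {a b : Γ}

theorem braid_pair (hbraid : τ (τ a b) a = b) (l₁ l₂ : List Γ) :
    LefMoves τ s x y (l₁ ++ b :: a :: l₂) (l₁ ++ τ a b :: b :: l₂) := by
  have hmove := moveR (τ := τ) (s := s) (x := x) (y := y) l₁ l₂ a (τ a b)
  rw [hbraid] at hmove
  exact (moveR l₁ l₂ b a).trans hmove

theorem braid_pair_slide_left (hbraid : τ (τ a b) a = b) (n : ℕ) (l₁ l₂ : List Γ) :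
    LefMoves τ s x y (l₁ ++ List.replicate n a ++ b :: a :: l₂)
      (l₁ ++ b :: a :: (List.replicate n b ++ l₂)) := by
  have hpair := braid_pair (s := s) (x := x) (y := y) hbraid
  calc l₁ ++ List.replicate n a ++ b :: a :: l₂
        ∼ l₁ ++ List.replicate n a ++ τ a b :: b :: l₂ := by
          simpa using hpair (l₁ ++ List.replicate n a) l₂
    _ ∼ l₁ ++ τ a b :: (List.replicate n b ++ b :: l₂) := by
        simpa using slide_left_replicate_of_twist_eq hbraid n l₁ (b :: l₂)
    _ ∼ l₁ ++ b :: a :: (List.replicate n b ++ l₂) := by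
        have hrun : List.replicate n b ++ b :: l₂ = b :: (List.replicate n b ++ l₂) := by
          rw [← List.singleton_append, ← List.append_assoc, ← List.replicate_succ',
            List.replicate_succ, List.cons_append]
        rw [hrun]
        exact (hpair l₁ (List.replicate n b ++ l₂)).symm

end Braid

end Moves

section Conversion

variable {a b : Γ} (N : ℕ)

local infix:50 " ∼ " => LefMoves τ b (((τ a)⁻¹ ^ N) b) b

theorem replicate_append_replicate_of_braid {L : List Γ}
    (hfix : ∀ u ∈ L, τ b u = u) (hbraid : τ (τ a b) a = b) (n : ℕ) :
    LefMoves τ b (((τ a)⁻¹ ^ N) b) b (L ++ List.replicate (N + n + 1) a)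
      (L ++ List.replicate (N + 1) a ++ List.replicate (n + 1) b) := by
  calc L ++ List.replicate (N + n + 1) a
      = L ++ List.replicate N a ++ List.replicate n a ++ [a] := by
        simp only [List.replicate_succ', List.replicate_add, List.append_assoc]
    _ ∼ L ++ List.replicate N a ++ List.replicate n a ++ b :: [a] := insert_stab _ _
    _ ∼ L ++ List.replicate N a ++ b :: a :: List.replicate n b := by
        simpa using braid_pair_slide_left hbraid n (L ++ List.replicate N a) []
    _ ∼ L ++ ((τ a)⁻¹ ^ N) b :: (List.replicate N a ++ a :: List.replicate n b) := by
        simpa using slide_left_replicate a b N L (a :: List.replicate n b)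
    _ ∼ L ++ b :: (List.replicate N a ++ a :: List.replicate n b) := repl _ _
    _ ∼ b :: (L ++ List.replicate N a ++ a :: List.replicate n b) := by
        simpa using slide_left_of_fixed hfix [] (List.replicate N a ++ a :: List.replicate n b)
    _ ∼ L ++ List.replicate N a ++ a :: List.replicate n b ++ [b] := append_comm [b] _
    _ = L ++ List.replicate (N + 1) a ++ List.replicate (n + 1) b := by
        simp [List.replicate_succ']

end Conversion

end LefMoves

theorem stmt_14 {Γ : Type*} (τ : Γ → Equiv.Perm Γ) (k : ℕ) (hk : 2 ≤ k)
    (α : Fin k → Γ)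
    -- nonadjacent vanishing cycles in the `A_k`-diagram commute with the twists
    (hcomm : ∀ p q : Fin k, ((p : ℕ) + 2 ≤ (q : ℕ) ∨ (q : ℕ) + 2 ≤ (p : ℕ)) →
      τ (α p) (α q) = α q)
    -- the braid-type relation between the last two vanishing cycles
    (hbraid : τ (τ (α ⟨k - 2, by omega⟩) (α ⟨k - 1, by omega⟩)) (α ⟨k - 2, by omega⟩)
      = α ⟨k - 1, by omega⟩)
    (i : Fin (k - 2) → ℕ) (i' i'' : ℕ) :
    LefMoves τ (α ⟨k - 1, by omega⟩)
      (((τ (α ⟨k - 2, by omega⟩))⁻¹ ^ (4 * i')) (α ⟨k - 1, by omega⟩))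
      (α ⟨k - 1, by omega⟩)
      ((List.ofFn fun j : Fin (k - 2) =>
          List.replicate (i j + 1) (α ⟨j, by omega⟩)).flatten ++
        List.replicate (4 * i' + i'' + 1) (α ⟨k - 2, by omega⟩))
      ((List.ofFn fun j : Fin (k - 2) =>
          List.replicate (i j + 1) (α ⟨j, by omega⟩)).flatten ++
        List.replicate (4 * i' + 1) (α ⟨k - 2, by omega⟩) ++
        List.replicate (i'' + 1) (α ⟨k - 1, by omega⟩)) := by
  refine LefMoves.replicate_append_replicate_of_braid _ ?_ hbraid i''
  simp only [List.mem_flatten, List.mem_ofFn]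
  rintro u ⟨_, ⟨j, rfl⟩, hu⟩
  rw [List.eq_of_mem_replicate hu]
  exact hcomm _ _ (Or.inr (by dsimp only; omega))
end
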